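/- arXiv:2503.14864 — 3 statements merged into one kernel-verified Lean document; each statement's English description precedes it below -/
import Mathlib

section
/- Let $a, c > 0$ and $\sigma \geq 0$. Then for every $r > 0$ and $R > 0$ with $r \leq R$, the function $g_r(t) = \frac{\chi_{[0,R^2]}(t)}{\sqrt{t}} - \frac{\chi_{[r^2, R^2 + r^2]}(t)}{\sqrt{t - r^2}}$ satisfies $\int_0^{R^2} |g_r(t)|\, e^{-r^2/(c t)}\, \frac{dt}{\sqrt{t}} \leq C$ and $\frac{1}{R} \int_{R^2}^{R^2 + r^2} |g_r(t)|\, dt \leq C$, with $C$ depending only on $c$ and not on $r, R$. -/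
/-!
Split `(0, R²]` at `r²`. Near the origin only the first term of `g_r` survives, and
`e^{-x} ≤ 1/x` gives `e^{-r²/(ct)}/t ≤ c/r²`, so that piece contributes at most `c`.
On `(r², R²]` we drop the exponential and use
`(1/√(t-r²) - 1/√t)/√t ≤ r²/(t √t √(t-r²)) = d/dt (2√(t-r²)/√t)`, a primitive bounded by `2`.
On `(R², R²+r²]` only the second term survives, with primitive `2√(t-r²)`, whence the
integral is at most `2√(R²) = 2R`.
-/

open MeasureTheory Set

theorem integrableOn_and_setIntegral_le_of_le {α : Type*} [MeasurableSpace α] {μ : Measure α}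
    {f g : α → ℝ} {s : Set α} (hs : MeasurableSet s) (hf : AEStronglyMeasurable f (μ.restrict s))
    (hf₀ : ∀ x ∈ s, 0 ≤ f x) (hfg : ∀ x ∈ s, f x ≤ g x) (hg : IntegrableOn g s μ) :
    IntegrableOn f s μ ∧ ∫ x in s, f x ∂μ ≤ ∫ x in s, g x ∂μ := by
  have hint : IntegrableOn f s μ := hg.mono' hf <| ae_restrict_of_forall_mem hs fun x hx => by
    rw [Real.norm_of_nonneg (hf₀ x hx)]
    exact hfg x hx
  exact ⟨hint, setIntegral_mono_on hint hg hs hfg⟩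

theorem integrableOn_and_setIntegral_Ioc_eq_sub_of_hasDerivAt_of_nonneg {f f' : ℝ → ℝ} {a b : ℝ}
    (hab : a ≤ b) (hcont : ContinuousOn f (Icc a b))
    (hderiv : ∀ x ∈ Ioo a b, HasDerivAt f (f' x) x) (hpos : ∀ x ∈ Ioo a b, 0 ≤ f' x) :
    IntegrableOn f' (Ioc a b) ∧ ∫ x in Ioc a b, f' x = f b - f a := by
  have hint := intervalIntegral.integrableOn_deriv_of_nonneg hcont hderiv hpos
  refine ⟨hint, ?_⟩
  rw [← intervalIntegral.integral_of_le hab]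
  exact intervalIntegral.integral_eq_sub_of_hasDerivAt_of_le hab hcont hderiv
    ((intervalIntegrable_iff_integrableOn_Ioc_of_le hab).2 hint)

theorem Real.exp_neg_le_inv {x : ℝ} (hx : 0 < x) : Real.exp (-x) ≤ x⁻¹ := by
  rw [Real.exp_neg]
  exact inv_anti₀ hx (by linarith [Real.add_one_le_exp x])

theorem exp_neg_div_mul_div_le {a c t : ℝ} (ha : 0 < a) (hc : 0 < c) (ht : 0 < t) :
    Real.exp (-a / (c * t)) / t ≤ c / a := by
  have hexp : Real.exp (-a / (c * t)) ≤ c * t / a := by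
    simpa [neg_div, inv_div] using Real.exp_neg_le_inv (by positivity : 0 < a / (c * t))
  calc Real.exp (-a / (c * t)) / t ≤ c * t / a / t := by gcongr
    _ = c / a := by field_simp

theorem hasDerivAt_two_mul_sqrt_sub_div_sqrt {a t : ℝ} (ha : 0 ≤ a) (ht : a < t) :
    HasDerivAt (fun t => 2 * √(t - a) / √t) (a / (t * √t * √(t - a))) t := by
  have ht₀ : 0 < t := ha.trans_lt ht
  have hta : 0 < t - a := sub_pos.2 ht
  have hu : 0 < √t := Real.sqrt_pos.2 ht₀
  have hsub : HasDerivAt (fun t => √(t - a)) (1 / (2 * √(t - a))) t :=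
    ((hasDerivAt_id t).sub_const a).sqrt hta.ne'
  refine ((hsub.const_mul 2).div (Real.hasDerivAt_sqrt ht₀.ne') hu.ne').congr_deriv ?_
  field_simp
  rw [Real.sq_sqrt ht₀.le, Real.sq_sqrt hta.le]
  ring

theorem one_div_sqrt_sub_sub_one_div_sqrt_div_sqrt_le {a t : ℝ} (ha : 0 ≤ a) (ht : a < t) :
    (1 / √(t - a) - 1 / √t) / √t ≤ a / (t * √t * √(t - a)) := by
  have ht₀ : 0 < t := ha.trans_lt ht
  have hta : 0 < t - a := sub_pos.2 ht
  have hu : 0 < √t := Real.sqrt_pos.2 ht₀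
  have hv : 0 < √(t - a) := Real.sqrt_pos.2 hta
  have hu2 := Real.sq_sqrt ht₀.le
  have hv2 := Real.sq_sqrt hta.le
  -- with `u = √t`, `v = √(t - a)` this is `(u - v) / (u² v) ≤ (u - v) (u + v) / (u³ v)`
  set u := √t
  set v := √(t - a)
  clear_value u v
  obtain rfl : a = u ^ 2 - v ^ 2 := by linarith
  subst hu2
  rw [div_le_div_iff₀ hu (by positivity)]
  field_simp
  nlinarith [mul_pos hu hv, mul_pos (mul_pos hu hv) hu]

theorem integrableOn_and_setIntegral_Ioc_div_mul_sqrt_mul_sqrt_sub_le_two {a b : ℝ} (ha : 0 < a)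
    (hab : a ≤ b) :
    IntegrableOn (fun t => a / (t * √t * √(t - a))) (Ioc a b) ∧
      ∫ t in Ioc a b, a / (t * √t * √(t - a)) ≤ 2 := by
  have hcont : ContinuousOn (fun t => 2 * √(t - a) / √t) (Icc a b) := by
    refine ContinuousOn.div (by fun_prop) (by fun_prop) fun t ht => ?_
    exact (Real.sqrt_pos.2 (ha.trans_le ht.1)).ne'
  obtain ⟨hint, heq⟩ := integrableOn_and_setIntegral_Ioc_eq_sub_of_hasDerivAt_of_nonneg hab hcont
    (fun t ht => hasDerivAt_two_mul_sqrt_sub_div_sqrt ha.le ht.1)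
    (fun t ht => by have := ha.trans ht.1; positivity)
  refine ⟨hint, ?_⟩
  have hb : 0 < √b := Real.sqrt_pos.2 (ha.trans_le hab)
  have hba : √(b - a) ≤ √b := Real.sqrt_le_sqrt (by linarith)
  rw [heq, sub_self, Real.sqrt_zero, mul_zero, zero_div, sub_zero, div_le_iff₀ hb]
  linarith

theorem setIntegral_Ioc_one_div_sqrt_sub_le {a b : ℝ} (ha : 0 ≤ a) (hab : a ≤ b) :
    ∫ t in Ioc b (b + a), 1 / √(t - a) ≤ 2 * √b := by
  have hderiv : ∀ t ∈ Ioo b (b + a), HasDerivAt (fun t => 2 * √(t - a)) (1 / √(t - a)) t := by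
    intro t ht
    have hta : t - a ≠ 0 := (sub_pos.2 (hab.trans_lt ht.1)).ne'
    have hsub : HasDerivAt (fun t => √(t - a)) (1 / (2 * √(t - a))) t :=
      ((hasDerivAt_id t).sub_const a).sqrt hta
    refine (hsub.const_mul 2).congr_deriv ?_
    field_simp
  obtain ⟨-, heq⟩ := integrableOn_and_setIntegral_Ioc_eq_sub_of_hasDerivAt_of_nonneg
    (by linarith) (by fun_prop) hderiv (fun t _ => by positivity)
  rw [heq, add_sub_cancel_right]
  linarith [Real.sqrt_nonneg (b - a)]

theorem indicator_Icc_one_div_sqrt_sub_of_le {a b t : ℝ} (ht : t ≤ b) :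
    (Icc a b).indicator (fun t => 1 / √(t - a)) t = 1 / √(t - a) := by
  by_cases hat : a ≤ t
  · exact indicator_of_mem (mem_Icc.2 ⟨hat, ht⟩) _
  -- below `a` the function is `1 / √(negative) = 1 / 0 = 0` anyway
  rw [indicator_of_notMem (fun h => hat h.1), Real.sqrt_eq_zero'.2 (by linarith), div_zero]

theorem indicator_Icc_zero_one_div_sqrt_of_le {b t : ℝ} (ht : t ≤ b) :
    (Icc 0 b).indicator (fun t => 1 / √t) t = 1 / √t := by
  simpa using indicator_Icc_one_div_sqrt_sub_of_le (a := 0) ht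

/-- The kernel `g_r` of the statement, with the cut-off `R` made explicit. -/
noncomputable def diffKernel (r R t : ℝ) : ℝ :=
  (Icc 0 (R ^ 2)).indicator (fun t => 1 / √t) t -
    (Icc (r ^ 2) (R ^ 2 + r ^ 2)).indicator (fun t => 1 / √(t - r ^ 2)) t

namespace diffKernel

variable {c r R t : ℝ}

@[fun_prop]
theorem measurable : Measurable (diffKernel r R) := by
  unfold diffKernel
  measurability

theorem eq_of_le_sq (hrR : r ^ 2 ≤ R ^ 2) (ht : t ≤ r ^ 2) : diffKernel r R t = 1 / √t := by
  rw [diffKernel, indicator_Icc_zero_one_div_sqrt_of_le (ht.trans hrR),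
    indicator_Icc_one_div_sqrt_sub_of_le (by nlinarith), Real.sqrt_eq_zero'.2 (sub_nonpos.2 ht),
    div_zero, sub_zero]

theorem eq_of_mem_Ioc_sq (ht : t ∈ Ioc (r ^ 2) (R ^ 2)) :
    diffKernel r R t = 1 / √t - 1 / √(t - r ^ 2) := by
  rw [diffKernel, indicator_Icc_zero_one_div_sqrt_of_le ht.2,
    indicator_Icc_one_div_sqrt_sub_of_le (by nlinarith [ht.2])]

theorem eq_of_mem_Ioc_tail (ht : t ∈ Ioc (R ^ 2) (R ^ 2 + r ^ 2)) :
    diffKernel r R t = -(1 / √(t - r ^ 2)) := by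
  rw [diffKernel, indicator_of_notMem (fun h => ht.1.not_ge h.2),
    indicator_Icc_one_div_sqrt_sub_of_le ht.2, zero_sub]

theorem integrableOn_and_setIntegral_Ioc_zero_le (hc : 0 < c) (hr : 0 < r)
    (hrR : r ^ 2 ≤ R ^ 2) :
    IntegrableOn (fun t => |diffKernel r R t| * Real.exp (-(r ^ 2) / (c * t)) / √t)
        (Ioc 0 (r ^ 2)) ∧
      ∫ t in Ioc 0 (r ^ 2), |diffKernel r R t| * Real.exp (-(r ^ 2) / (c * t)) / √t ≤ c := by
  have hle : ∀ t ∈ Ioc 0 (r ^ 2),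
      |diffKernel r R t| * Real.exp (-(r ^ 2) / (c * t)) / √t ≤ c / r ^ 2 := by
    rintro t ⟨ht₀, htr⟩
    rw [eq_of_le_sq hrR htr, abs_of_nonneg (by positivity), div_mul_eq_mul_div, one_mul, div_div,
      Real.mul_self_sqrt ht₀.le]
    exact exp_neg_div_mul_div_le (by positivity) hc ht₀
  obtain ⟨hint, hint_le⟩ := integrableOn_and_setIntegral_le_of_le measurableSet_Ioc
    (by fun_prop : Measurable _).aestronglyMeasurable (fun t _ => by positivity) hle
    (integrableOn_const (μ := volume) measure_Ioc_lt_top.ne)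
  refine ⟨hint, hint_le.trans_eq ?_⟩
  rw [setIntegral_const, Real.volume_real_Ioc_of_le (sq_nonneg r), sub_zero, smul_eq_mul]
  field_simp

theorem integrableOn_and_setIntegral_Ioc_sq_le (hc : 0 < c) (hr : 0 < r)
    (hrR : r ^ 2 ≤ R ^ 2) :
    IntegrableOn (fun t => |diffKernel r R t| * Real.exp (-(r ^ 2) / (c * t)) / √t)
        (Ioc (r ^ 2) (R ^ 2)) ∧
      ∫ t in Ioc (r ^ 2) (R ^ 2), |diffKernel r R t| * Real.exp (-(r ^ 2) / (c * t)) / √t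
        ≤ 2 := by
  obtain ⟨hg, hg_le⟩ :=
    integrableOn_and_setIntegral_Ioc_div_mul_sqrt_mul_sqrt_sub_le_two (by positivity) hrR
  have hle : ∀ t ∈ Ioc (r ^ 2) (R ^ 2), |diffKernel r R t| * Real.exp (-(r ^ 2) / (c * t)) / √t
      ≤ r ^ 2 / (t * √t * √(t - r ^ 2)) := by
    intro t ht
    have ht₀ : 0 < t := (sq_nonneg r).trans_lt ht.1
    have hdiff : 0 ≤ 1 / √(t - r ^ 2) - 1 / √t := sub_nonneg.2 <|
      one_div_le_one_div_of_le (Real.sqrt_pos.2 (sub_pos.2 ht.1))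
        (Real.sqrt_le_sqrt (sub_le_self _ (sq_nonneg r)))
    have hexp : Real.exp (-(r ^ 2) / (c * t)) ≤ 1 := Real.exp_le_one_iff.2 <|
      div_nonpos_of_nonpos_of_nonneg (neg_nonpos.2 (sq_nonneg r)) (by positivity)
    rw [eq_of_mem_Ioc_sq ht, abs_sub_comm, abs_of_nonneg hdiff]
    calc _ ≤ (1 / √(t - r ^ 2) - 1 / √t) / √t :=
          div_le_div_of_nonneg_right (mul_le_of_le_one_right hdiff hexp) (Real.sqrt_nonneg t)
      _ ≤ _ := one_div_sqrt_sub_sub_one_div_sqrt_div_sqrt_le (sq_nonneg r) ht.1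
  obtain ⟨hint, hint_le⟩ := integrableOn_and_setIntegral_le_of_le measurableSet_Ioc
    (by fun_prop : Measurable _).aestronglyMeasurable (fun t _ => by positivity) hle hg
  exact ⟨hint, hint_le.trans hg_le⟩

theorem setIntegral_Ioc_zero_le (hc : 0 < c) (hr : 0 < r) (hrR : r ≤ R) :
    ∫ t in Ioc 0 (R ^ 2), |diffKernel r R t| * Real.exp (-(r ^ 2) / (c * t)) / √t
      ≤ c + 2 := by
  have hrR₂ : r ^ 2 ≤ R ^ 2 := pow_le_pow_left₀ hr.le hrR 2
  obtain ⟨hint₁, hle₁⟩ := integrableOn_and_setIntegral_Ioc_zero_le hc hr hrR₂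
  obtain ⟨hint₂, hle₂⟩ := integrableOn_and_setIntegral_Ioc_sq_le hc hr hrR₂
  rw [← Ioc_union_Ioc_eq_Ioc (sq_nonneg r) hrR₂,
    setIntegral_union (Ioc_disjoint_Ioc_of_le le_rfl) measurableSet_Ioc hint₁ hint₂]
  linarith

theorem one_div_mul_setIntegral_Ioc_tail_le (hr : 0 < r) (hrR : r ≤ R) :
    1 / R * ∫ t in Ioc (R ^ 2) (R ^ 2 + r ^ 2), |diffKernel r R t| ≤ 2 := by
  have hR : 0 < R := hr.trans_le hrR
  have heq : EqOn (fun t => |diffKernel r R t|) (fun t => 1 / √(t - r ^ 2))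
      (Ioc (R ^ 2) (R ^ 2 + r ^ 2)) := fun t ht => by
    dsimp only
    rw [eq_of_mem_Ioc_tail ht, abs_neg, abs_of_nonneg (by positivity)]
  rw [setIntegral_congr_fun measurableSet_Ioc heq, one_div_mul_eq_div, div_le_iff₀ hR]
  calc _ ≤ 2 * √(R ^ 2) :=
        setIntegral_Ioc_one_div_sqrt_sub_le (sq_nonneg r) (pow_le_pow_left₀ hr.le hrR 2)
    _ = 2 * R := by rw [Real.sqrt_sq hR.le]

end diffKernel

/-- Uniform bounds for the resolution-of-identity difference kernel
`g_r(t) = χ_{[0,R²]}(t)/√t − χ_{[r²,R²+r²]}(t)/√(t−r²)`: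
`∫₀^{R²} |g_r(t)| e^{-r²/(ct)} dt/√t ≤ C` and `R⁻¹ ∫_{R²}^{R²+r²} |g_r(t)| dt ≤ C`,
with `C` depending only on `c`. -/
theorem stmt_7 (c : ℝ) (hc : 0 < c) :
    ∃ C : ℝ, 0 < C ∧ ∀ r R : ℝ, 0 < r → r ≤ R →
      (∫ t in Set.Ioc (0 : ℝ) (R ^ 2),
          |Set.indicator (Set.Icc (0 : ℝ) (R ^ 2)) (fun t => 1 / Real.sqrt t) t -
              Set.indicator (Set.Icc (r ^ 2) (R ^ 2 + r ^ 2))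
                (fun t => 1 / Real.sqrt (t - r ^ 2)) t| *
            Real.exp (-(r ^ 2) / (c * t)) / Real.sqrt t) ≤ C ∧
      (1 / R) * (∫ t in Set.Ioc (R ^ 2) (R ^ 2 + r ^ 2),
          |Set.indicator (Set.Icc (0 : ℝ) (R ^ 2)) (fun t => 1 / Real.sqrt t) t -
              Set.indicator (Set.Icc (r ^ 2) (R ^ 2 + r ^ 2))
                (fun t => 1 / Real.sqrt (t - r ^ 2)) t|) ≤ C := by
  refine ⟨c + 2, by positivity, fun r R hr hrR => ⟨?_, ?_⟩⟩
  · exact diffKernel.setIntegral_Ioc_zero_le hc hr hrR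
  · exact (diffKernel.one_div_mul_setIntegral_Ioc_tail_le hr hrR).trans (by linarith)
end

section
/- (Grushin ball inclusions) Let $n, m \geq 1$ and $\beta > 0$. Define on $\mathbb{R}^{n+m}$ the quasi-distance $\sigma((x,y),(x',y')) = |x - x'| + \frac{|y - y'|}{(|x| + |x'|)^{\beta} + |y - y'|^{\beta/(\beta+1)}}$ (with the convention that the quotient is $0$ when $y = y'$). Then there exist constants $c_1, c_2 > 0$ depending only on $\beta$ such that for all $r > 0$ and $y \in \mathbb{R}^m$: $B_n(0, c_1 r) \times B_m(y, c_1 r^{\beta+1}) \subseteq \{\eta : \sigma((0,y), \eta) < r\} \subseteq B_n(0, c_2 r) \times B_m(y, c_2 r^{\beta+1})$, where $B_n$, $B_m$ denote Euclidean balls in $\mathbb{R}^n$, $\mathbb{R}^m$. -/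
open MeasureTheory Metric Set

/-- The Grushin quasi-distance
`σ((x,y),(x',y')) = |x-x'| + |y-y'| / ((|x|+|x'|)^β + |y-y'|^{β/(β+1)})`
(the quotient being `0` when `y = y'`, by the Lean convention `0/0 = 0`). -/
noncomputable def gsigma (n m : ℕ) (β : ℝ)
    (ξ η : EuclideanSpace ℝ (Fin n) × EuclideanSpace ℝ (Fin m)) : ℝ :=
  ‖ξ.1 - η.1‖ + ‖ξ.2 - η.2‖ / ((‖ξ.1‖ + ‖η.1‖) ^ β + ‖ξ.2 - η.2‖ ^ (β / (β + 1)))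

/-! With `t = |y - y'|^{1/(β+1)}` the quotient in `σ((0,y),(x',y'))` is at most `t`, which gives
the first inclusion. Conversely `σ < r` gives `|x'| < r` and `t^{β+1} < r (|x'|^β + t^β) ≤
r^{β+1} + r t^β`, and this forces `t < 2r`: otherwise `t^{β+1} ≥ 2r t^β ≥ r t^β + r^{β+1}`. -/

theorem div_add_rpow_le_rpow_one_sub {A d s : ℝ} (hA : 0 ≤ A) (hd : 0 ≤ d) :
    d / (A + d ^ s) ≤ d ^ (1 - s) := by
  rcases hd.eq_or_lt with rfl | hd
  · rw [zero_div]
    exact Real.rpow_nonneg le_rfl _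
  · calc d / (A + d ^ s) ≤ d / d ^ s :=
          div_le_div_of_nonneg_left hd.le (Real.rpow_pos_of_pos hd s) (le_add_of_nonneg_left hA)
      _ = d ^ (1 - s) := by rw [Real.rpow_sub hd, Real.rpow_one]

theorem lt_two_mul_of_rpow_add_one_lt {t r β : ℝ} (ht : 0 ≤ t) (hr : 0 ≤ r) (hβ : 0 ≤ β)
    (h : t ^ (β + 1) < r ^ (β + 1) + r * t ^ β) : t < 2 * r := by
  by_contra! htr
  have hpow : r ^ β ≤ t ^ β := Real.rpow_le_rpow hr (by linarith) hβ
  have h₁ : 2 * r * t ^ β ≤ t * t ^ β :=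
    mul_le_mul_of_nonneg_right htr (Real.rpow_nonneg ht β)
  have h₂ : r * r ^ β ≤ r * t ^ β := mul_le_mul_of_nonneg_left hpow hr
  rw [Real.rpow_add_one' ht (by linarith), Real.rpow_add_one' hr (by linarith)] at h
  linarith

theorem lt_two_mul_rpow_of_div_add_rpow_lt {a d r β : ℝ} (hβ : 0 ≤ β) (ha : 0 ≤ a) (har : a ≤ r)
    (hd : 0 ≤ d) (h : d / (a ^ β + d ^ (β / (β + 1))) < r) : d < (2 * r) ^ (β + 1) := by
  have hβ1 : 0 < β + 1 := by linarith
  rcases hd.eq_or_lt with rfl | hd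
  · rw [zero_div] at h
    positivity
  set t := d ^ (1 / (β + 1))
  have ht : 0 ≤ t := Real.rpow_nonneg hd.le _
  have ht_succ : t ^ (β + 1) = d := by
    rw [← Real.rpow_mul hd.le, one_div_mul_cancel hβ1.ne', Real.rpow_one]
  have ht_pow : t ^ β = d ^ (β / (β + 1)) := by
    rw [← Real.rpow_mul hd.le, one_div_mul_eq_div]
  have hden : 0 < a ^ β + d ^ (β / (β + 1)) :=
    add_pos_of_nonneg_of_pos (Real.rpow_nonneg ha β) (Real.rpow_pos_of_pos hd _)
  have hd_lt : t ^ (β + 1) < r ^ (β + 1) + r * t ^ β := by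
    rw [div_lt_iff₀ hden] at h
    have hpow : a ^ β ≤ r ^ β := Real.rpow_le_rpow ha har hβ
    rw [ht_succ, ht_pow, Real.rpow_add_one' (ha.trans har) hβ1.ne']
    nlinarith
  rw [← ht_succ]
  exact Real.rpow_lt_rpow ht (lt_two_mul_of_rpow_add_one_lt ht (ha.trans har) hβ hd_lt) hβ1

section

variable {n m : ℕ} {β : ℝ}

theorem gsigma_zero_left (y : EuclideanSpace ℝ (Fin m))
    (η : EuclideanSpace ℝ (Fin n) × EuclideanSpace ℝ (Fin m)) :
    gsigma n m β (0, y) η = ‖η.1‖ + ‖y - η.2‖ / (‖η.1‖ ^ β + ‖y - η.2‖ ^ (β / (β + 1))) := by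
  simp only [gsigma, zero_sub, norm_neg, norm_zero, zero_add]

theorem gsigma_zero_left_lt {r : ℝ} (hβ : 0 < β) {y : EuclideanSpace ℝ (Fin m)}
    {η : EuclideanSpace ℝ (Fin n) × EuclideanSpace ℝ (Fin m)} (hx : ‖η.1‖ < r / 2)
    (hy : ‖y - η.2‖ < (r / 2) ^ (β + 1)) : gsigma n m β (0, y) η < r := by
  have hβ1 : 0 < β + 1 := by linarith
  have hquot := div_add_rpow_le_rpow_one_sub (Real.rpow_nonneg (norm_nonneg η.1) β)
    (norm_nonneg (y - η.2)) (s := β / (β + 1))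
  have hexp : 1 - β / (β + 1) = (β + 1)⁻¹ := by field_simp; ring
  have hroot : ‖y - η.2‖ ^ (β + 1)⁻¹ < r / 2 := by
    rw [Real.rpow_inv_lt_iff_of_pos (norm_nonneg _) (by linarith [norm_nonneg η.1]) hβ1]
    exact hy
  rw [hexp] at hquot
  rw [gsigma_zero_left]
  linarith

theorem norm_lt_and_lt_of_gsigma_zero_left_lt {r : ℝ} (hβ : 0 < β) {y : EuclideanSpace ℝ (Fin m)}
    {η : EuclideanSpace ℝ (Fin n) × EuclideanSpace ℝ (Fin m)} (h : gsigma n m β (0, y) η < r) :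
    ‖η.1‖ < r ∧ ‖y - η.2‖ < (2 * r) ^ (β + 1) := by
  rw [gsigma_zero_left] at h
  have hquot : 0 ≤ ‖y - η.2‖ / (‖η.1‖ ^ β + ‖y - η.2‖ ^ (β / (β + 1))) := by positivity
  have hx : ‖η.1‖ < r := by linarith
  refine ⟨hx, lt_two_mul_rpow_of_div_add_rpow_lt hβ.le (norm_nonneg _) hx.le (norm_nonneg _) ?_⟩
  linarith [norm_nonneg η.1]

end

theorem stmt_9_general (n m : ℕ) (β : ℝ) (hβ : 0 < β) :
    ∃ c₁ c₂ : ℝ, 0 < c₁ ∧ 0 < c₂ ∧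
      ∀ (r : ℝ), 0 < r → ∀ y : EuclideanSpace ℝ (Fin m),
        (ball (0 : EuclideanSpace ℝ (Fin n)) (c₁ * r) ×ˢ ball y (c₁ * r ^ (β + 1))
            ⊆ {η | gsigma n m β (0, y) η < r}) ∧
        ({η | gsigma n m β (0, y) η < r}
            ⊆ ball (0 : EuclideanSpace ℝ (Fin n)) (c₂ * r) ×ˢ ball y (c₂ * r ^ (β + 1))) := by
  have hc₁ : ((1 : ℝ) / 2) ^ (β + 1) ≤ 1 / 2 := by
    simpa using Real.rpow_le_rpow_of_exponent_ge (by norm_num : (0 : ℝ) < 1 / 2)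
      (by norm_num) (by linarith : (1 : ℝ) ≤ β + 1)
  have hc₂ : (1 : ℝ) ≤ 2 ^ (β + 1) := Real.one_le_rpow (by norm_num) (by linarith)
  refine ⟨(1 / 2) ^ (β + 1), 2 ^ (β + 1), by positivity, by positivity, fun r hr y => ⟨?_, ?_⟩⟩
  · rintro η ⟨hx, hy⟩
    rw [mem_ball, dist_zero_right] at hx
    rw [mem_ball, dist_comm, dist_eq_norm, ← Real.mul_rpow (by norm_num) hr.le] at hy
    exact gsigma_zero_left_lt hβ (by nlinarith) (by simpa [div_eq_inv_mul] using hy)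
  · intro η hη
    obtain ⟨hx, hy⟩ := norm_lt_and_lt_of_gsigma_zero_left_lt hβ hη
    rw [Real.mul_rpow (by norm_num) hr.le] at hy
    refine ⟨?_, ?_⟩
    · rw [mem_ball, dist_zero_right]
      nlinarith
    · rwa [mem_ball, dist_comm, dist_eq_norm]

/-- Grushin ball inclusions at centers `(0,y)`: there are `c₁, c₂ > 0` depending only on `β`
with `B_n(0,c₁r) × B_m(y,c₁r^{β+1}) ⊆ {σ((0,y),·) < r} ⊆ B_n(0,c₂r) × B_m(y,c₂r^{β+1})`. -/
theorem stmt_9 (n m : ℕ) (hn : 1 ≤ n) (hm : 1 ≤ m) (β : ℝ) (hβ : 0 < β) :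
    ∃ c₁ c₂ : ℝ, 0 < c₁ ∧ 0 < c₂ ∧
      ∀ (r : ℝ), 0 < r → ∀ y : EuclideanSpace ℝ (Fin m),
        (ball (0 : EuclideanSpace ℝ (Fin n)) (c₁ * r) ×ˢ ball y (c₁ * r ^ (β + 1))
            ⊆ {η | gsigma n m β (0, y) η < r}) ∧
        ({η | gsigma n m β (0, y) η < r}
            ⊆ ball (0 : EuclideanSpace ℝ (Fin n)) (c₂ * r) ×ˢ ball y (c₂ * r ^ (β + 1))) :=
  stmt_9_general n m β hβ
end

section
/- (Grushin ball inclusions at scale $|x|$) Let $n, m \geq 1$ and $\beta > 0$, and let $\sigma$ be the quasi-distance $\sigma((x,y),(x',y')) = |x - x'| + \frac{|y - y'|}{(|x| + |x'|)^{\beta} + |y - y'|^{\beta/(\beta+1)}}$ on $\mathbb{R}^{n+m}$. Then there exist $c_3, c_4 > 0$ depending only on $\beta$ such that for every $(x,y)$ with $x \neq 0$: $B_n(x, c_3 |x|) \times B_m(y, c_3 |x|^{\beta+1}) \subseteq \{\eta : \sigma((x,y), \eta) < |x|\} \subseteq B_n(x, c_4 |x|) \times B_m(y, c_4 |x|^{\beta+1})$.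 -/
open MeasureTheory Metric Set

/-- Grushin ball inclusions at scale `|x|`: there exist `c₃, c₄ > 0` depending only on `β`
such that for every `(x,y)` with `x ≠ 0`,
`B_n(x,c₃|x|) × B_m(y,c₃|x|^{β+1}) ⊆ {σ((x,y),·) < |x|} ⊆ B_n(x,c₄|x|) × B_m(y,c₄|x|^{β+1})`. -/
theorem stmt_10 (n m : ℕ) (hn : 1 ≤ n) (hm : 1 ≤ m) (β : ℝ) (hβ : 0 < β) :
    ∃ c₃ c₄ : ℝ, 0 < c₃ ∧ 0 < c₄ ∧
      ∀ (x : EuclideanSpace ℝ (Fin n)) (y : EuclideanSpace ℝ (Fin m)), x ≠ 0 →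
        (ball x (c₃ * ‖x‖) ×ˢ ball y (c₃ * ‖x‖ ^ (β + 1))
            ⊆ {η | gsigma n m β (x, y) η < ‖x‖}) ∧
        ({η | gsigma n m β (x, y) η < ‖x‖}
            ⊆ ball x (c₄ * ‖x‖) ×ˢ ball y (c₄ * ‖x‖ ^ (β + 1))) := by
  have h3 : (1:ℝ) ≤ 3 ^ β := Real.one_le_rpow (by norm_num) hβ.le
  have h2p : (0:ℝ) < 2 ^ (β + 1) := Real.rpow_pos_of_pos (by norm_num) _
  refine ⟨1/2, 2 * 3 ^ β + 2 ^ (β + 1), by norm_num, by linarith, ?_⟩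
  intro x y hx
  have hr : (0:ℝ) < ‖x‖ := norm_pos_iff.mpr hx
  have hβ1 : (0:ℝ) < β + 1 := by linarith
  have hrb : (0:ℝ) < ‖x‖ ^ β := Real.rpow_pos_of_pos hr β
  have hradd : ‖x‖ ^ (β + 1) = ‖x‖ ^ β * ‖x‖ := by
    rw [Real.rpow_add hr, Real.rpow_one]
  have hrp : (0:ℝ) < ‖x‖ ^ (β + 1) := Real.rpow_pos_of_pos hr _
  constructor
  · rintro ⟨x', y'⟩ ⟨h1, h2⟩
    simp only [mem_ball, dist_eq_norm] at h1 h2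
    simp only [mem_setOf_eq, gsigma]
    have ht : (0:ℝ) ≤ ‖y - y'‖ := norm_nonneg _
    have hts : (0:ℝ) ≤ ‖y - y'‖ ^ (β/(β+1)) := Real.rpow_nonneg ht _
    have hden : ‖x‖ ^ β ≤ (‖x‖ + ‖x'‖) ^ β + ‖y - y'‖ ^ (β/(β+1)) := by
      have h0 : ‖x‖ ^ β ≤ (‖x‖ + ‖x'‖) ^ β :=
        Real.rpow_le_rpow hr.le (le_add_of_nonneg_right (norm_nonneg _)) hβ.le
      linarith
    have hx1 : ‖x - x'‖ < 1/2 * ‖x‖ := by rw [norm_sub_rev]; exact h1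
    have hy1 : ‖y - y'‖ / ((‖x‖ + ‖x'‖) ^ β + ‖y - y'‖ ^ (β/(β+1))) < 1/2 * ‖x‖ := by
      have step1 : ‖y - y'‖ / ((‖x‖ + ‖x'‖) ^ β + ‖y - y'‖ ^ (β/(β+1)))
          ≤ ‖y - y'‖ / ‖x‖ ^ β := by gcongr
      have step2 : ‖y - y'‖ / ‖x‖ ^ β < 1/2 * ‖x‖ := by
        rw [div_lt_iff₀ hrb]
        have : ‖y - y'‖ < 1/2 * ‖x‖ ^ (β + 1) := by rw [norm_sub_rev]; exact h2
        rw [hradd] at this; linarith [this]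
      linarith
    linarith
  · rintro ⟨x', y'⟩ h
    simp only [mem_setOf_eq, gsigma] at h
    set t := ‖y - y'‖ with htdef
    have ht : (0:ℝ) ≤ t := norm_nonneg _
    have hts : (0:ℝ) ≤ t ^ (β/(β+1)) := Real.rpow_nonneg ht _
    have hdenpos : (0:ℝ) < (‖x‖ + ‖x'‖) ^ β + t ^ (β/(β+1)) := by
      have : (0:ℝ) < (‖x‖ + ‖x'‖) ^ β :=
        Real.rpow_pos_of_pos (by positivity) β
      linarith
    have hdivnn : (0:ℝ) ≤ t / ((‖x‖ + ‖x'‖) ^ β + t ^ (β/(β+1))) :=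
      div_nonneg ht hdenpos.le
    have hx1 : ‖x - x'‖ < ‖x‖ := by linarith
    have hdiv : t / ((‖x‖ + ‖x'‖) ^ β + t ^ (β/(β+1))) < ‖x‖ := by
      have := norm_nonneg (x - x'); linarith
    have ht1 : t < ‖x‖ * ((‖x‖ + ‖x'‖) ^ β + t ^ (β/(β+1))) := by
      have := (div_lt_iff₀ hdenpos).mp hdiv
      linarith [this]
    have hx'lt : ‖x'‖ < 2 * ‖x‖ := by
      have : ‖x'‖ ≤ ‖x‖ + ‖x - x'‖ := by
        have := norm_sub_norm_le x x'
        have h2 := norm_sub_rev x x'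
        nlinarith [abs_norm_sub_norm_le x x', abs_le.mp (abs_norm_sub_norm_le x x')]
      linarith
    have hsum3 : ‖x‖ + ‖x'‖ ≤ 3 * ‖x‖ := by linarith
    have hden3 : (‖x‖ + ‖x'‖) ^ β ≤ (3 * ‖x‖) ^ β :=
      Real.rpow_le_rpow (by positivity) hsum3 hβ.le
    have h3r : (3 * ‖x‖) ^ β = 3 ^ β * ‖x‖ ^ β :=
      Real.mul_rpow (by norm_num) hr.le
    have ht2 : t < ‖x‖ * ((3 * ‖x‖) ^ β + t ^ (β/(β+1))) := by
      have : ‖x‖ * ((‖x‖ + ‖x'‖) ^ β + t ^ (β/(β+1)))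
          ≤ ‖x‖ * ((3 * ‖x‖) ^ β + t ^ (β/(β+1))) := by
        apply mul_le_mul_of_nonneg_left _ hr.le; linarith
      linarith
    -- main bound on t
    have htbound : t < (2 * 3 ^ β + 2 ^ (β + 1)) * ‖x‖ ^ (β + 1) := by
      rcases le_or_gt (t ^ (β/(β+1))) ((3 * ‖x‖) ^ β) with hc | hc
      · rw [mul_add] at ht2
        have hb2 : ‖x‖ * t ^ (β/(β+1)) ≤ ‖x‖ * (3 * ‖x‖) ^ β :=
          mul_le_mul_of_nonneg_left hc hr.le
        have key : t < 2 * (‖x‖ * (3 * ‖x‖) ^ β) := by linarith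
        have e : ‖x‖ * (3 * ‖x‖) ^ β = 3 ^ β * ‖x‖ ^ (β + 1) := by
          rw [h3r, hradd]; ring
        rw [e] at key
        have e2 : (2 * 3 ^ β + 2 ^ (β + 1)) * ‖x‖ ^ (β + 1)
            = 2 * (3 ^ β * ‖x‖ ^ (β + 1)) + 2 ^ (β + 1) * ‖x‖ ^ (β + 1) := by ring
        rw [e2]
        linarith [mul_pos h2p hrp]
      · -- t > 0 in this case
        have htpos : 0 < t := by
          by_contra h0
          push_neg at h0
          have ht0 : t = 0 := le_antisymm h0 ht
          rw [ht0, Real.zero_rpow (by positivity)] at hc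
          have : (0:ℝ) < (3 * ‖x‖) ^ β := Real.rpow_pos_of_pos (by positivity) β
          linarith
        have ht3 : t < 2 * ‖x‖ * t ^ (β/(β+1)) := by nlinarith
        have hsplit : t = t ^ (β/(β+1)) * t ^ (1/(β+1)) := by
          rw [← Real.rpow_add htpos]
          rw [show β/(β+1) + 1/(β+1) = 1 by field_simp]
          rw [Real.rpow_one]
        have htspos : 0 < t ^ (β/(β+1)) := Real.rpow_pos_of_pos htpos _
        have hroot : t ^ (1/(β+1)) < 2 * ‖x‖ := by
          have h' : t ^ (β/(β+1)) * t ^ (1/(β+1)) < t ^ (β/(β+1)) * (2 * ‖x‖) := by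
            have e1 : t ^ (β/(β+1)) * (2 * ‖x‖) = 2 * ‖x‖ * t ^ (β/(β+1)) := by ring
            rw [← hsplit, e1]; exact ht3
          exact (mul_lt_mul_iff_right₀ htspos).mp h'
        have : t < (2 * ‖x‖) ^ (β + 1) := by
          have h5 : (t ^ (1/(β+1))) ^ (β+1) < (2 * ‖x‖) ^ (β+1) :=
            Real.rpow_lt_rpow (Real.rpow_nonneg ht _) hroot hβ1
          have h6 : (t ^ (1/(β+1))) ^ (β+1) = t := by
            rw [← Real.rpow_mul ht, show 1/(β+1) * (β+1) = 1 by field_simp,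
              Real.rpow_one]
          rwa [h6] at h5
        have h2r : (2 * ‖x‖) ^ (β + 1) = 2 ^ (β+1) * ‖x‖ ^ (β+1) :=
          Real.mul_rpow (by norm_num) hr.le
        rw [h2r] at this
        have e2 : (2 * 3 ^ β + 2 ^ (β + 1)) * ‖x‖ ^ (β + 1)
            = 2 * (3 ^ β * ‖x‖ ^ (β + 1)) + 2 ^ (β + 1) * ‖x‖ ^ (β + 1) := by ring
        rw [e2]
        have hpos : (0:ℝ) < 3 ^ β * ‖x‖ ^ (β + 1) := mul_pos (by linarith) hrp
        linarith
    have hc4 : (1:ℝ) ≤ 2 * 3 ^ β + 2 ^ (β + 1) := by linarith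
    constructor
    · simp only [mem_ball, dist_eq_norm]
      rw [norm_sub_rev]
      calc ‖x - x'‖ < ‖x‖ := hx1
        _ = 1 * ‖x‖ := (one_mul _).symm
        _ ≤ (2 * 3 ^ β + 2 ^ (β + 1)) * ‖x‖ := mul_le_mul_of_nonneg_right hc4 hr.le
    · simp only [mem_ball, dist_eq_norm]
      rw [norm_sub_rev]
      exact htbound
end
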